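/- Fix μ ∈ ℝ with |μ| < 0.625 and I ∈ ℝ. Then |μ·α(I)| < 1, where α(I) = sinh(π/2)·I²/sinh(πI/2) (extended by α(0) = 0), and hence for every φ ∈ ℝ the equation μ·α(I)·sin φ + sin s = 0 has a solution s = −arcsin(μ·α(I)·sin φ). -/
import Mathlib

noncomputable def alphaFn (I : ℝ) : ℝ :=
  if I = 0 then 0 else Real.sinh (Real.pi / 2) * I ^ 2 / Real.sinh (Real.pi * I / 2)

private lemma sinh_lb8 (t : ℝ) (ht : 0 ≤ t) : t + t ^ 3 / 8 ≤ Real.sinh t := by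
  have hs2 : t / 2 ≤ Real.sinh (t / 2) := (Real.self_le_sinh_iff).2 (by linarith)
  have hs4 : t / 4 ≤ Real.sinh (t / 4) := (Real.self_le_sinh_iff).2 (by linarith)
  have hc2 : 1 + 2 * (t / 4) ^ 2 ≤ Real.cosh (t / 2) := by
    have h := Real.cosh_two_mul (t / 4)
    rw [show 2 * (t / 4) = t / 2 by ring] at h
    rw [h, Real.cosh_sq]
    nlinarith [hs4, Real.sinh_nonneg_iff.2 (show (0:ℝ) ≤ t/4 by linarith)]
  have hexp := Real.sinh_two_mul (t / 2)
  rw [show 2 * (t / 2) = t by ring] at hexp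
  have hA : (0:ℝ) ≤ t / 2 := by linarith
  have hprod : (t / 2) * (1 + 2 * (t / 4) ^ 2) ≤ Real.sinh (t / 2) * Real.cosh (t / 2) :=
    mul_le_mul hs2 hc2 (by positivity) (Real.sinh_nonneg_iff.2 hA)
  rw [hexp]
  nlinarith [hprod]

private lemma sinh_lb (t : ℝ) (ht : 0 ≤ t) : t + 5 * t ^ 3 / 32 ≤ Real.sinh t := by
  have hs2 : t / 2 + (t / 2) ^ 3 / 8 ≤ Real.sinh (t / 2) := sinh_lb8 _ (by linarith)
  have hs4 : t / 4 ≤ Real.sinh (t / 4) := (Real.self_le_sinh_iff).2 (by linarith)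
  have hc2 : 1 + 2 * (t / 4) ^ 2 ≤ Real.cosh (t / 2) := by
    have h := Real.cosh_two_mul (t / 4)
    rw [show 2 * (t / 4) = t / 2 by ring] at h
    rw [h, Real.cosh_sq]
    nlinarith [hs4, Real.sinh_nonneg_iff.2 (show (0:ℝ) ≤ t/4 by linarith)]
  have hexp := Real.sinh_two_mul (t / 2)
  rw [show 2 * (t / 2) = t by ring] at hexp
  have hA : (0:ℝ) ≤ t / 2 + (t / 2) ^ 3 / 8 := by positivity
  have hprod : (t / 2 + (t / 2) ^ 3 / 8) * (1 + 2 * (t / 4) ^ 2)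
      ≤ Real.sinh (t / 2) * Real.cosh (t / 2) :=
    mul_le_mul hs2 hc2 (by positivity) (Real.sinh_nonneg_iff.2 (by linarith))
  rw [hexp]
  nlinarith [hprod, pow_nonneg ht 5]

private lemma sinh_quad_lb (t : ℝ) (ht : 0 ≤ t) : (78 / 100 : ℝ) * t ^ 2 ≤ Real.sinh t := by
  have h := sinh_lb t ht
  nlinarith [mul_nonneg ht (sq_nonneg (t - 2.496))]

private lemma sinh_half_pi_ub : Real.sinh (Real.pi / 2) ≤ 2.91 := by
  have hπ : Real.pi < 3.1416 := by linarith [Real.pi_lt_d6]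
  have hπ0 : 0 < Real.pi := Real.pi_pos
  have hlow : (1 : ℝ) - Real.pi / 16 ≤ Real.exp (-(Real.pi / 16)) := by
    have := Real.add_one_le_exp (-(Real.pi / 16)); linarith
  have hpos : (0 : ℝ) < 1 - Real.pi / 16 := by linarith
  have hpow : ((1 : ℝ) - Real.pi / 16) ^ 8 ≤ Real.exp (-(Real.pi / 2)) := by
    have h8 : Real.exp (-(Real.pi / 2)) = Real.exp (-(Real.pi / 16)) ^ 8 := by
      rw [← Real.exp_nat_mul]; congr 1; push_cast; ring
    rw [h8]
    exact pow_le_pow_left₀ hpos.le hlow 8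
  have hval : (0.17 : ℝ) ≤ ((1 : ℝ) - Real.pi / 16) ^ 8 := by
    have h1 : (0.80365 : ℝ) ≤ 1 - Real.pi / 16 := by linarith
    calc (0.17 : ℝ) ≤ (0.80365 : ℝ) ^ 8 := by norm_num
      _ ≤ (1 - Real.pi / 16) ^ 8 := pow_le_pow_left₀ (by norm_num) h1 8
  have hneg : (0.17 : ℝ) ≤ Real.exp (-(Real.pi / 2)) := hval.trans hpow
  have hmul : Real.exp (Real.pi / 2) * Real.exp (-(Real.pi / 2)) = 1 := by
    rw [← Real.exp_add]; simp
  have hub : Real.exp (Real.pi / 2) ≤ 1 / 0.17 := by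
    have hp := Real.exp_pos (Real.pi / 2)
    nlinarith
  have hsinh : Real.sinh (Real.pi / 2)
      = (Real.exp (Real.pi / 2) - Real.exp (-(Real.pi / 2))) / 2 := Real.sinh_eq _
  rw [hsinh]
  nlinarith

private lemma alpha_abs_le : ∀ I : ℝ, |alphaFn I| ≤ 8 / 5 := by
  intro I
  by_cases hI : I = 0
  · norm_num [alphaFn, hI]
  · have hπ : (3.141592 : ℝ) < Real.pi := by linarith [Real.pi_gt_d6]
    have hS0 : 0 < Real.sinh (Real.pi / 2) :=
      Real.sinh_pos_iff.2 (by positivity)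
    have hI2 : (0 : ℝ) < I ^ 2 := by positivity
    have habsI : 0 < |I| := abs_pos.2 hI
    have habs : |Real.sinh (Real.pi * I / 2)| = Real.sinh (Real.pi * |I| / 2) := by
      rcases lt_or_gt_of_ne hI with h | h
      · rw [abs_of_neg h, abs_of_neg (Real.sinh_neg_iff.2 (by nlinarith [Real.pi_pos]))]
        rw [← Real.sinh_neg]; ring_nf
      · rw [abs_of_pos h, abs_of_pos (Real.sinh_pos_iff.2 (by nlinarith [Real.pi_pos]))]
    have hquad : (78 / 100 : ℝ) * (Real.pi * |I| / 2) ^ 2 ≤ Real.sinh (Real.pi * |I| / 2) :=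
      sinh_quad_lb _ (by positivity)
    have hden : (0 : ℝ) < Real.sinh (Real.pi * |I| / 2) := Real.sinh_pos_iff.2 (by positivity)
    have hα : |alphaFn I| = Real.sinh (Real.pi / 2) * I ^ 2 / Real.sinh (Real.pi * |I| / 2) := by
      rw [alphaFn, if_neg hI, abs_div, habs, abs_of_pos (by positivity)]
    rw [hα, div_le_iff₀ hden]
    have hsq : (Real.pi * |I| / 2) ^ 2 = (Real.pi / 2) ^ 2 * I ^ 2 := by
      rw [show Real.pi * |I| / 2 = (Real.pi / 2) * |I| by ring, mul_pow, sq_abs]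
    have hpi2 : (2.4674 : ℝ) ≤ (Real.pi / 2) ^ 2 := by nlinarith
    have hbound : (1.92 : ℝ) * I ^ 2 ≤ Real.sinh (Real.pi * |I| / 2) := by
      rw [hsq] at hquad
      nlinarith [mul_le_mul_of_nonneg_right hpi2 hI2.le]
    nlinarith [mul_le_mul_of_nonneg_right sinh_half_pi_ub hI2.le, hbound]

theorem horizontal_crest (μ I : ℝ) (hμ : |μ| < 0.625) :
    |μ * alphaFn I| < 1 ∧
    ∀ φ : ℝ,
      μ * alphaFn I * Real.sin φ +
        Real.sin (-Real.arcsin (μ * alphaFn I * Real.sin φ)) = 0 := by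
  have hα := alpha_abs_le I
  have hμ0 : 0 ≤ |μ| := abs_nonneg μ
  have hα0 : 0 ≤ |alphaFn I| := abs_nonneg _
  have key : |μ * alphaFn I| < 1 := by
    rw [abs_mul]
    nlinarith
  refine ⟨key, fun φ => ?_⟩
  set y := μ * alphaFn I * Real.sin φ with hy
  have hyle : |y| < 1 := by
    rw [hy, abs_mul]
    have hs : |Real.sin φ| ≤ 1 := Real.abs_sin_le_one φ
    nlinarith [abs_nonneg (μ * alphaFn I), abs_nonneg (Real.sin φ)]
  have h1 : -1 ≤ y := by have := abs_le.1 hyle.le; exact this.1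
  have h2 : y ≤ 1 := (abs_le.1 hyle.le).2
  rw [Real.sin_neg, Real.sin_arcsin h1 h2]
  ring
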